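/- arXiv:2006.03538 — 4 statements merged into one kernel-verified Lean document; each statement's English description precedes it below -/
import Mathlib

section
/- Let u, v be linearly independent unit vectors in ℝ² and let f = (f₁, f₂) be a vector field on ℝ² with f₁, f₂ ∈ C²_c(ℝ²). If L f(x) = 0 and I f(x) = 0 for all x ∈ ℝ², then f = 0 identically. That is, a compactly supported C² vector field is uniquely determined by its longitudinal V-line transform together with its first moment longitudinal V-line transform. -/
open MeasureTheory Matrix

noncomputable section

/-- Dot product on ℝ². -/
def dot2 (u v : ℝ × ℝ) : ℝ := u.1 * v.1 + u.2 * v.2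

/-- `x^⊥ = (-x₂, x₁)`. -/
def perp2 (x : ℝ × ℝ) : ℝ × ℝ := (-x.2, x.1)

/-- Divergent beam transform `X_u h (x) = ∫₀^∞ h(x + t u) dt`. -/
def Xbeam (u : ℝ × ℝ) (h : ℝ × ℝ → ℝ) (x : ℝ × ℝ) : ℝ :=
  ∫ t in Set.Ioi (0 : ℝ), h (x + t • u)

/-- First moment divergent beam transform `X¹_u h (x) = ∫₀^∞ t h(x + t u) dt`. -/
def Xmom (u : ℝ × ℝ) (h : ℝ × ℝ → ℝ) (x : ℝ × ℝ) : ℝ :=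
  ∫ t in Set.Ioi (0 : ℝ), t * h (x + t • u)

/-- Directional derivative `D_u h = u · ∇ h`. -/
def Ddir (u : ℝ × ℝ) (h : ℝ × ℝ → ℝ) (x : ℝ × ℝ) : ℝ := fderiv ℝ h x u

/-- Twice continuously differentiable, compactly supported. -/
def IsC2c (h : ℝ × ℝ → ℝ) : Prop := ContDiff ℝ 2 h ∧ HasCompactSupport h

/-- `div f = ∂f₁/∂x₁ + ∂f₂/∂x₂`. -/
def divf (f₁ f₂ : ℝ × ℝ → ℝ) (x : ℝ × ℝ) : ℝ :=
  fderiv ℝ f₁ x (1, 0) + fderiv ℝ f₂ x (0, 1)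

/-- `curl f = ∂f₂/∂x₁ - ∂f₁/∂x₂`. -/
def curlf (f₁ f₂ : ℝ × ℝ → ℝ) (x : ℝ × ℝ) : ℝ :=
  fderiv ℝ f₂ x (1, 0) - fderiv ℝ f₁ x (0, 1)

/-- Longitudinal V-line transform `L f = -X_u (f·u) + X_v (f·v)`. -/
def VlineL (u v : ℝ × ℝ) (f₁ f₂ : ℝ × ℝ → ℝ) (x : ℝ × ℝ) : ℝ :=
  - Xbeam u (fun y => f₁ y * u.1 + f₂ y * u.2) x
  + Xbeam v (fun y => f₁ y * v.1 + f₂ y * v.2) x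

/-- Transverse V-line transform `T f = -X_u (f·u^⊥) + X_v (f·v^⊥)`. -/
def VlineT (u v : ℝ × ℝ) (f₁ f₂ : ℝ × ℝ → ℝ) (x : ℝ × ℝ) : ℝ :=
  - Xbeam u (fun y => f₁ y * (perp2 u).1 + f₂ y * (perp2 u).2) x
  + Xbeam v (fun y => f₁ y * (perp2 v).1 + f₂ y * (perp2 v).2) x

/-- First moment longitudinal V-line transform `I f = -X¹_u (f·u) + X¹_v (f·v)`. -/
def VmomL (u v : ℝ × ℝ) (f₁ f₂ : ℝ × ℝ → ℝ) (x : ℝ × ℝ) : ℝ :=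
  - Xmom u (fun y => f₁ y * u.1 + f₂ y * u.2) x
  + Xmom v (fun y => f₁ y * v.1 + f₂ y * v.2) x

/-- First moment transverse V-line transform `J f = -X¹_u (f·u^⊥) + X¹_v (f·v^⊥)`. -/
def VmomT (u v : ℝ × ℝ) (f₁ f₂ : ℝ × ℝ → ℝ) (x : ℝ × ℝ) : ℝ :=
  - Xmom u (fun y => f₁ y * (perp2 u).1 + f₂ y * (perp2 u).2) x
  + Xmom v (fun y => f₁ y * (perp2 v).1 + f₂ y * (perp2 v).2) x

/-- Radon transform `R h (ψ, s) = ∫_ℝ h (s ψ + t ψ^⊥) dt`. -/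
def Radon2 (h : ℝ × ℝ → ℝ) (ψ : ℝ × ℝ) (s : ℝ) : ℝ :=
  ∫ t : ℝ, h (s • ψ + t • perp2 ψ)

/-- The (vector-valued) star transform. -/
def starS (m : ℕ) (γ : Fin m → ℝ × ℝ) (c : Fin m → ℝ)
    (f₁ f₂ : ℝ × ℝ → ℝ) (x : ℝ × ℝ) : ℝ × ℝ :=
  ∑ i, c i •
    (Xbeam (γ i) (fun y => f₁ y * (γ i).1 + f₂ y * (γ i).2) x,
     Xbeam (γ i) (fun y => f₁ y * (perp2 (γ i)).1 + f₂ y * (perp2 (γ i)).2) x)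

/-- `γ(ψ) = -∑ cᵢ γᵢ / (ψ·γᵢ)`. -/
def starGamma (m : ℕ) (γ : Fin m → ℝ × ℝ) (c : Fin m → ℝ) (ψ : ℝ × ℝ) : ℝ × ℝ :=
  - ∑ i, (c i / dot2 ψ (γ i)) • γ i

/-- A star configuration is symmetric if `m = 2k` and, after re-indexing by a
permutation, `γᵢ = -γ_{k+i}` and `cᵢ = -c_{k+i}` for `i = 1, …, k`. -/
def StarSymmetric (m : ℕ) (γ : Fin m → ℝ × ℝ) (c : Fin m → ℝ) : Prop :=
  ∃ k : ℕ, ∃ hk : m = 2 * k, ∃ σ : Equiv.Perm (Fin m),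
    ∀ i : Fin m, ∀ hi : (i : ℕ) < k,
      γ (σ i) = - γ (σ ⟨(i : ℕ) + k, by omega⟩) ∧
      c (σ i) = - c (σ ⟨(i : ℕ) + k, by omega⟩)

/-! Put `g_u = f·u` and `g_v = f·v`. The hypotheses say `X_u g_u = X_v g_v =: B` and
`X¹_u g_u = X¹_v g_v =: A`. Moving the base point along the beam gives `D_u X¹_u = -X_u` and
`D_u X_u = -id`, so `D_u A = D_v A = -B` and `A` is constant along `u - v`. Each line in direction
`u - v` contains points whose `u`-ray misses `supp g_u`, where `A` vanishes; hence `A = 0`, then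
`B = -D_u A = 0` and `g_u = -D_u B = 0`, and likewise `g_v = 0`. As `u, v` are independent, `f = 0`.
Combining the two directional derivatives needs `A` to be differentiable, which holds because `A`
is a convolution, along the ray, of the `C¹` compactly supported `g_u` with `t ↦ t·1_{t>0}`. -/

open Set Metric

section General

variable {E F : Type*} [NormedAddCommGroup E] [NormedSpace ℝ E] [NormedAddCommGroup F]

lemma setIntegral_Ioi_zero_comp_add_right [NormedSpace ℝ F] (h : ℝ → F) (s : ℝ) :
    ∫ t in Ioi (0 : ℝ), h (t + s) = ∫ t in Ioi s, h t := by
  simpa using (measurePreserving_add_right volume s).setIntegral_preimage_emb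
    (measurableEmbedding_addRight s) h (Ioi s)

lemma hasDerivAt_setIntegral_Ioi [NormedSpace ℝ F] [CompleteSpace F] {h : ℝ → F}
    (hc : Continuous h) (hi : Integrable h) (s₀ : ℝ) :
    HasDerivAt (fun s => ∫ t in Ioi s, h t) (-h s₀) s₀ := by
  have hsplit : (fun s => ∫ t in Ioi s, h t) =
      fun s => (∫ t in Ioi s₀, h t) - ∫ t in s₀..s, h t := by
    funext s
    rw [← intervalIntegral.integral_Ioi_sub_Ioi' hi.integrableOn hi.integrableOn, sub_sub_cancel]
  rw [hsplit, ← zero_sub]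
  exact (hasDerivAt_const _ _).sub (hc.integral_hasStrictDerivAt s₀ s₀).hasDerivAt

lemma HasCompactSupport.comp_add_smul {M : Type*} [Zero M] {g : E → M}
    (hg : HasCompactSupport g) (x : E) {u : E} (hu : u ≠ 0) :
    HasCompactSupport (fun t : ℝ => g (x + t • u)) :=
  hg.comp_isClosedEmbedding
    ((Homeomorph.addLeft x).isClosedEmbedding.comp (isClosedEmbedding_smul_left hu))

lemma Continuous.integrable_comp_add_smul {g : E → F} (hg : Continuous g)
    (hgc : HasCompactSupport g) (x : E) {u : E} (hu : u ≠ 0) :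
    Integrable (fun t : ℝ => g (x + t • u)) :=
  (hg.comp (by fun_prop)).integrable_of_hasCompactSupport (hgc.comp_add_smul x hu)

lemma contDiff_integral_mul_comp_add_smul {n : ℕ∞} {φ : ℝ → ℝ} (hφ : LocallyIntegrable φ)
    {g : E → ℝ} (hg : ContDiff ℝ n g) (hgc : HasCompactSupport g) {u : E} (hu : u ≠ 0) :
    ContDiff ℝ n (fun x => ∫ t, φ t * g (x + t • u)) := by
  rw [contDiff_iff_contDiffAt]
  intro x₀
  obtain ⟨R, hR⟩ := hgc.isBounded.subset_closedBall 0
  have hvanish : ∀ p t, p ∈ ball x₀ 1 → t ∉ closedBall (0 : ℝ) ((R + ‖x₀‖ + 1) / ‖u‖) →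
      g (p - t • u) = 0 := by
    intro p t hp ht
    refine image_eq_zero_of_notMem_tsupport fun hmem => ht ?_
    have h1 : ‖p - t • u‖ ≤ R := by simpa using hR hmem
    have h2 : ‖p‖ ≤ ‖x₀‖ + 1 := by
      have := norm_le_norm_add_norm_sub' p x₀
      rw [mem_ball, dist_eq_norm] at hp
      linarith
    have h3 : |t| * ‖u‖ ≤ R + ‖x₀‖ + 1 := by
      have := norm_sub_norm_le (t • u) (t • u - p)
      rw [norm_smul, Real.norm_eq_abs, sub_sub_cancel, norm_sub_rev] at this
      linarith
    rwa [mem_closedBall, dist_zero_right, Real.norm_eq_abs, le_div_iff₀ (norm_pos_iff.2 hu)]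
  have key := contDiffOn_convolution_right_with_param_comp (ContinuousLinearMap.lsmul ℝ ℝ)
    (v := fun _ : E => (0 : ℝ)) (μ := volume) contDiffOn_const isOpen_ball
    (isCompact_closedBall _ _) hvanish hφ (g := fun p s => g (p - s • u))
    (hg.comp (by fun_prop)).contDiffOn
  convert key.contDiffAt (ball_mem_nhds x₀ one_pos) using 2 with x
  simp [convolution_def, sub_eq_add_neg]

lemma apply_add_smul_eq_of_fderiv_apply_eq_zero [NormedSpace ℝ F] {A : E → F}
    (hA : Differentiable ℝ A) {w : E} (hw : ∀ p, fderiv ℝ A p w = 0) (y : E) (s : ℝ) :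
    A (y + s • w) = A y := by
  have hφ : ∀ s : ℝ, HasDerivAt (fun s => A (y + s • w)) 0 s := fun s => by
    simpa [hw, Function.comp_def] using (hA (y + s • w)).hasFDerivAt.comp_hasDerivAt s
      (((hasDerivAt_id s).smul_const w).const_add y)
  simpa using is_const_of_deriv_eq_zero (fun s => (hφ s).differentiableAt)
    (fun s => (hφ s).deriv) s 0

end General

lemma det_ne_zero_of_linearIndependent {u v : ℝ × ℝ} (huv : LinearIndependent ℝ ![u, v]) :
    u.1 * v.2 - u.2 * v.1 ≠ 0 := by
  intro hd
  rw [LinearIndependent.pair_iff] at huv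
  obtain ⟨hv₂, hu₂⟩ := huv v.2 (-u.2) (by ext <;> simp <;> linarith)
  obtain ⟨hv₁, hu₁⟩ := huv (-v.1) u.1 (by ext <;> simp <;> linarith)
  rw [neg_eq_zero] at hu₂
  simpa using huv 1 0 (by ext <;> simp [hu₁, hu₂])

lemma exists_forall_add_smul_notMem {K : Set (ℝ × ℝ)} (hK : IsCompact K) {u v : ℝ × ℝ}
    (hd : u.1 * v.2 - u.2 * v.1 ≠ 0) (y : ℝ × ℝ) :
    ∃ s : ℝ, ∀ t : ℝ, y + s • (u - v) + t • u ∉ K := by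
  set ℓ : ℝ × ℝ → ℝ := fun z => u.1 * z.2 - u.2 * z.1
  obtain ⟨m, hm⟩ := (hK.image (by fun_prop : Continuous ℓ)).bddBelow
  refine ⟨(ℓ y - m + 1) / (u.1 * v.2 - u.2 * v.1), fun t ht => ?_⟩
  have hval : ℓ (y + ((ℓ y - m + 1) / (u.1 * v.2 - u.2 * v.1)) • (u - v) + t • u) = m - 1 := by
    simp only [ℓ, Prod.fst_add, Prod.snd_add, Prod.smul_fst, Prod.smul_snd, Prod.fst_sub,
      Prod.snd_sub, smul_eq_mul]
    field_simp
    ring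
  linarith [hm ⟨_, ht, hval⟩]

section BeamTransforms

variable {g : ℝ × ℝ → ℝ} {u : ℝ × ℝ}

lemma Xbeam_add_smul (x : ℝ × ℝ) (s : ℝ) :
    Xbeam u g (x + s • u) = ∫ t in Ioi s, g (x + t • u) := by
  rw [Xbeam, ← setIntegral_Ioi_zero_comp_add_right (fun t => g (x + t • u))]
  congr 1
  funext t
  congr 1
  module

lemma Xmom_add_smul (x : ℝ × ℝ) (s : ℝ) :
    Xmom u g (x + s • u) = ∫ t in Ioi s, (t - s) * g (x + t • u) := by
  rw [Xmom, ← setIntegral_Ioi_zero_comp_add_right (fun t => (t - s) * g (x + t • u))]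
  congr 1
  funext t
  rw [add_sub_cancel_right]
  congr 2
  module

lemma hasLineDerivAt_Xbeam (hg : Continuous g) (hgc : HasCompactSupport g) (hu : u ≠ 0)
    (x : ℝ × ℝ) : HasLineDerivAt ℝ (Xbeam u g) (-g x) x u := by
  have := hasDerivAt_setIntegral_Ioi (hg.comp (by fun_prop : Continuous fun t : ℝ => x + t • u))
    (hg.integrable_comp_add_smul hgc x hu) 0
  simpa [HasLineDerivAt, Xbeam_add_smul] using this

lemma hasLineDerivAt_Xmom (hg : Continuous g) (hgc : HasCompactSupport g) (hu : u ≠ 0)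
    (x : ℝ × ℝ) : HasLineDerivAt ℝ (Xmom u g) (-Xbeam u g x) x u := by
  set h : ℝ → ℝ := fun t => g (x + t • u)
  have hc : Continuous h := hg.comp (by fun_prop)
  have hi : Integrable h := hg.integrable_comp_add_smul hgc x hu
  have hi' : Integrable (fun t => t * h t) :=
    (continuous_id.mul hc).integrable_of_hasCompactSupport (hgc.comp_add_smul x hu).mul_left
  have hsplit : (fun s => Xmom u g (x + s • u)) =
      fun s => (∫ t in Ioi s, t * h t) - s * ∫ t in Ioi s, h t := by
    funext s
    simp only [Xmom_add_smul, sub_mul, ← integral_const_mul]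
    exact integral_sub hi'.integrableOn (hi.const_mul s).integrableOn
  have hd : HasDerivAt (fun s => (∫ t in Ioi s, t * h t) - s * ∫ t in Ioi s, h t)
      (-(0 * h 0) - (1 * (∫ t in Ioi 0, h t) + 0 * -h 0)) 0 :=
    (hasDerivAt_setIntegral_Ioi (continuous_id'.mul hc) hi' 0).sub
      ((hasDerivAt_id' 0).mul (hasDerivAt_setIntegral_Ioi hc hi 0))
  rw [HasLineDerivAt, hsplit]
  simpa [Xbeam] using hd

lemma contDiff_Xmom {n : ℕ∞} (hg : ContDiff ℝ n g) (hgc : HasCompactSupport g) (hu : u ≠ 0) :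
    ContDiff ℝ n (Xmom u g) := by
  have hind : Xmom u g = fun x => ∫ t, (Ioi 0).indicator (fun t => t) t * g (x + t • u) := by
    funext x
    simp only [Xmom, ← integral_indicator measurableSet_Ioi, indicator_mul_left]
  rw [hind]
  exact contDiff_integral_mul_comp_add_smul
    (continuous_id'.locallyIntegrable.indicator measurableSet_Ioi) hg hgc hu

lemma Xmom_eq_zero_of_forall_notMem_tsupport {x : ℝ × ℝ}
    (hx : ∀ t : ℝ, 0 < t → x + t • u ∉ tsupport g) : Xmom u g x = 0 :=
  setIntegral_eq_zero_of_forall_eq_zero fun t ht => by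
    rw [image_eq_zero_of_notMem_tsupport (hx t ht), mul_zero]

lemma eq_zero_of_Xbeam_eq_zero (hg : Continuous g) (hgc : HasCompactSupport g) (hu : u ≠ 0)
    (h0 : Xbeam u g = 0) : g = 0 := by
  funext x
  have hder := hasLineDerivAt_Xbeam hg hgc hu x
  rw [h0] at hder
  simpa using hder.unique (hasDerivAt_const (0 : ℝ) (0 : ℝ))

theorem eq_zero_of_Xbeam_eq_of_Xmom_eq {h : ℝ × ℝ → ℝ} {v : ℝ × ℝ} (hg : ContDiff ℝ 1 g)
    (hgc : HasCompactSupport g) (hh : Continuous h) (hhc : HasCompactSupport h)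
    (huv : LinearIndependent ℝ ![u, v]) (hX : Xbeam u g = Xbeam v h)
    (hXm : Xmom u g = Xmom v h) : g = 0 ∧ h = 0 := by
  have hu : u ≠ 0 := by simpa using huv.ne_zero 0
  have hv : v ≠ 0 := by simpa using huv.ne_zero 1
  have hA : Differentiable ℝ (Xmom u g) := (contDiff_Xmom hg hgc hu).differentiable one_ne_zero
  have hAu : ∀ p, fderiv ℝ (Xmom u g) p u = -Xbeam u g p := fun p => by
    rw [← (hA p).lineDeriv_eq_fderiv, (hasLineDerivAt_Xmom hg.continuous hgc hu p).lineDeriv]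
  have hAv : ∀ p, fderiv ℝ (Xmom u g) p v = -Xbeam u g p := fun p => by
    rw [← (hA p).lineDeriv_eq_fderiv, hXm, hX, (hasLineDerivAt_Xmom hh hhc hv p).lineDeriv]
  have hA0 : Xmom u g = 0 := by
    funext y
    obtain ⟨s, hs⟩ := exists_forall_add_smul_notMem hgc (det_ne_zero_of_linearIndependent huv) y
    rw [← apply_add_smul_eq_of_fderiv_apply_eq_zero hA (w := u - v)
      (fun p => by rw [map_sub, hAu, hAv, sub_self]) y s]
    exact Xmom_eq_zero_of_forall_notMem_tsupport fun t _ => hs t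
  have hXg : Xbeam u g = 0 := by
    funext p
    simpa [hA0] using (hAu p).symm
  exact ⟨eq_zero_of_Xbeam_eq_zero hg.continuous hgc hu hXg,
    eq_zero_of_Xbeam_eq_zero hh hhc hv (hX ▸ hXg)⟩

end BeamTransforms

lemma IsC2c.mul_add_mul {f₁ f₂ : ℝ × ℝ → ℝ} (hf₁ : IsC2c f₁) (hf₂ : IsC2c f₂) (a b : ℝ) :
    IsC2c (fun y => f₁ y * a + f₂ y * b) :=
  ⟨(hf₁.1.mul contDiff_const).add (hf₂.1.mul contDiff_const),
    hf₁.2.mul_right.add hf₂.2.mul_right⟩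

theorem stmt10_general (u v : ℝ × ℝ)
    (huv : LinearIndependent ℝ ![u, v])
    (f₁ f₂ : ℝ × ℝ → ℝ) (hf₁ : IsC2c f₁) (hf₂ : IsC2c f₂)
    (hL : ∀ x, VlineL u v f₁ f₂ x = 0) (hI : ∀ x, VmomL u v f₁ f₂ x = 0) :
    ∀ x, f₁ x = 0 ∧ f₂ x = 0 := by
  have hgu := hf₁.mul_add_mul hf₂ u.1 u.2
  have hgv := hf₁.mul_add_mul hf₂ v.1 v.2
  obtain ⟨hu0, hv0⟩ := eq_zero_of_Xbeam_eq_of_Xmom_eq (hgu.1.of_le one_le_two) hgu.2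
    hgv.1.continuous hgv.2 huv (funext fun x => neg_add_eq_zero.mp (hL x))
    (funext fun x => neg_add_eq_zero.mp (hI x))
  intro x
  have eu : f₁ x * u.1 + f₂ x * u.2 = 0 := congrFun hu0 x
  have ev : f₁ x * v.1 + f₂ x * v.2 = 0 := congrFun hv0 x
  have hd := det_ne_zero_of_linearIndependent huv
  constructor
  · refine (mul_eq_zero.mp ?_).resolve_right hd
    linear_combination v.2 * eu - u.2 * ev
  · refine (mul_eq_zero.mp ?_).resolve_right hd
    linear_combination u.1 * ev - v.1 * eu

/-- `L f ≡ 0` and `I f ≡ 0` imply `f ≡ 0`. -/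
theorem stmt10 (u v : ℝ × ℝ) (hu : u.1 ^ 2 + u.2 ^ 2 = 1) (hv : v.1 ^ 2 + v.2 ^ 2 = 1)
    (huv : LinearIndependent ℝ ![u, v])
    (f₁ f₂ : ℝ × ℝ → ℝ) (hf₁ : IsC2c f₁) (hf₂ : IsC2c f₂)
    (hL : ∀ x, VlineL u v f₁ f₂ x = 0) (hI : ∀ x, VmomL u v f₁ f₂ x = 0) :
    ∀ x, f₁ x = 0 ∧ f₂ x = 0 :=
  stmt10_general u v huv f₁ f₂ hf₁ hf₂ hL hI
end
end

section
/- Let γ and ψ be unit vectors in ℝ² with ψ·γ ≠ 0, and let h : ℝ² → ℝ be a twice continuously differentiable function with compact support. Then for every s ∈ ℝ, (d/ds) R(X_γ h)(ψ, s) = -(1/(ψ·γ)) · R h(ψ, s). -/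
open MeasureTheory Matrix

noncomputable section

/-!
In the orthonormal frame `(ψ, ψ^⊥)`, moving a distance `r` along `γ` shifts the `ψ`-coordinate
by `(ψ ⋅ γ) r` and the `ψ^⊥`-coordinate by `(ψ^⊥ ⋅ γ) r`. Integrating along the line first, the
second shift is absorbed by translation invariance, so by Fubini
`R(X_γ h)(ψ, s) = ∫₀^∞ Rh(ψ, s + (ψ ⋅ γ) r) dr`. For `ψ ⋅ γ > 0` this is
`(ψ ⋅ γ)⁻¹ ∫ₛ^∞ Rh(ψ, x) dx`, and the fundamental theorem of calculus gives the derivative;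
the case `ψ ⋅ γ < 0` follows by reflecting `s`.
-/

open Set

section HalfLineIntegral

variable {E : Type*} [NormedAddCommGroup E] [NormedSpace ℝ E]

theorem setIntegral_Ioi_zero_comp_add (G : ℝ → E) (s : ℝ) :
    ∫ x in Ioi (0 : ℝ), G (s + x) = ∫ x in Ioi s, G x := by
  have hshift := (measurableEmbedding_addLeft s).setIntegral_map (μ := volume) G (Ioi s)
  rw [map_add_left_eq_self, preimage_const_add_Ioi, sub_self] at hshift
  exact hshift.symm

theorem hasDerivAt_setIntegral_Ioi_s14 [CompleteSpace E] {G : ℝ → E} (hGc : Continuous G)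
    (hGi : Integrable G) (s : ℝ) : HasDerivAt (fun s => ∫ x in Ioi s, G x) (-G s) s := by
  have hsplit : (fun s => ∫ x in Ioi s, G x) = fun s => (∫ x in Ioi 0, G x) - ∫ x in 0..s, G x :=
    funext fun s => eq_sub_of_add_eq' <|
      intervalIntegral.integral_interval_add_Ioi hGi.integrableOn hGi.integrableOn
  rw [hsplit]
  exact ((hGc.integral_hasStrictDerivAt 0 s).hasDerivAt).const_sub _

theorem setIntegral_Ioi_zero_comp_add_mul_of_pos (G : ℝ → E) (s : ℝ) {a : ℝ} (ha : 0 < a) :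
    ∫ r in Ioi (0 : ℝ), G (s + a * r) = a⁻¹ • ∫ x in Ioi s, G x := by
  have hscale := integral_comp_mul_left_Ioi (fun x => G (s + x)) 0 ha
  rw [mul_zero] at hscale
  rw [hscale, setIntegral_Ioi_zero_comp_add]

theorem hasDerivAt_setIntegral_Ioi_zero_comp_add_mul [CompleteSpace E] {G : ℝ → E}
    (hGc : Continuous G) (hGi : Integrable G) {a : ℝ} (ha : a ≠ 0) (s : ℝ) :
    HasDerivAt (fun s => ∫ r in Ioi (0 : ℝ), G (s + a * r)) (-a⁻¹ • G s) s := by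
  wlog hapos : 0 < a generalizing G a s
  · -- reflect: `G (s + a r) = G' (-s + (-a) r)` with `G' x = G (-x)`
    have hna : 0 < -a := neg_pos.mpr (lt_of_le_of_ne (not_lt.mp hapos) ha)
    have hrefl := this (hGc.comp continuous_neg) hGi.comp_neg hna.ne' (-s) hna
    have hcomp := hrefl.scomp s (hasDerivAt_neg s)
    simp only [Function.comp_def, neg_neg, inv_neg, smul_smul] at hcomp
    convert hcomp using 2
    · simp only [neg_add, neg_mul, neg_neg]
    · simp
  have heq : (fun s => ∫ r in Ioi (0 : ℝ), G (s + a * r)) = fun s => a⁻¹ • ∫ x in Ioi s, G x :=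
    funext fun s => setIntegral_Ioi_zero_comp_add_mul_of_pos G s hapos
  rw [heq, neg_smul, ← smul_neg]
  exact (hasDerivAt_setIntegral_Ioi_s14 hGc hGi s).const_smul a⁻¹

end HalfLineIntegral

theorem continuous_integral_prodMk_of_hasCompactSupport {X Y E : Type*} [TopologicalSpace X]
    [TopologicalSpace Y] [MeasurableSpace Y] [OpensMeasurableSpace Y] {μ : Measure Y}
    [IsFiniteMeasureOnCompacts μ] [NormedAddCommGroup E] [NormedSpace ℝ E] {g : X × Y → E}
    (hg : Continuous g) (hgs : HasCompactSupport g) :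
    Continuous fun x => ∫ y, g (x, y) ∂μ := by
  rw [← continuousOn_univ]
  refine continuousOn_integral_of_compact_support (hgs.image continuous_snd)
    hg.continuousOn fun x y _ hy => image_eq_zero_of_notMem_tsupport fun hxy => hy ?_
  exact ⟨(x, y), hxy, rfl⟩

def frameHomeomorph (ψ : ℝ × ℝ) (hψ : ψ.1 ^ 2 + ψ.2 ^ 2 = 1) : (ℝ × ℝ) ≃ₜ (ℝ × ℝ) where
  toFun z := z.1 • ψ + z.2 • perp2 ψ
  invFun w := (dot2 ψ w, dot2 (perp2 ψ) w)
  left_inv z := by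
    simp only [dot2, perp2, Prod.ext_iff, Prod.smul_fst, Prod.smul_snd, Prod.fst_add,
      Prod.snd_add, smul_eq_mul]
    constructor
    · linear_combination z.1 * hψ
    · linear_combination z.2 * hψ
  right_inv w := by
    simp only [dot2, perp2, Prod.ext_iff, Prod.smul_fst, Prod.smul_snd, Prod.fst_add,
      Prod.snd_add, smul_eq_mul]
    constructor
    · linear_combination w.1 * hψ
    · linear_combination w.2 * hψ
  continuous_toFun := by fun_prop
  continuous_invFun := by unfold dot2 perp2; fun_prop

def shearHomeomorph (s a b : ℝ) (ha : a ≠ 0) : (ℝ × ℝ) ≃ₜ (ℝ × ℝ) where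
  toFun q := (s + a * q.2, q.1 + b * q.2)
  invFun w := (w.2 - b * ((w.1 - s) / a), (w.1 - s) / a)
  left_inv q := by
    simp only [Prod.ext_iff]
    constructor <;> field_simp <;> ring
  right_inv w := by
    simp only [Prod.ext_iff]
    constructor <;> field_simp <;> ring
  continuous_toFun := by fun_prop
  continuous_invFun := by fun_prop

section Radon

variable {h : ℝ × ℝ → ℝ} {ψ : ℝ × ℝ}

theorem continuous_radon2 (hh : Continuous h) (hhc : HasCompactSupport h)
    (hψ : ψ.1 ^ 2 + ψ.2 ^ 2 = 1) : Continuous (Radon2 h ψ) :=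
  continuous_integral_prodMk_of_hasCompactSupport (hh.comp (frameHomeomorph ψ hψ).continuous)
    (hhc.comp_homeomorph (frameHomeomorph ψ hψ))

theorem integrable_radon2 (hh : Continuous h) (hhc : HasCompactSupport h)
    (hψ : ψ.1 ^ 2 + ψ.2 ^ 2 = 1) : Integrable (Radon2 h ψ) := by
  have hint := (hh.comp (frameHomeomorph ψ hψ).continuous).integrable_of_hasCompactSupport
    (μ := volume) (hhc.comp_homeomorph (frameHomeomorph ψ hψ))
  rw [Measure.volume_eq_prod] at hint
  exact hint.integral_prod_left

theorem smul_add_smul_perp2_add_smul (hψ : ψ.1 ^ 2 + ψ.2 ^ 2 = 1) (γ : ℝ × ℝ) (s t r : ℝ) :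
    (s • ψ + t • perp2 ψ) + r • γ
      = (s + dot2 ψ γ * r) • ψ + (t + dot2 (perp2 ψ) γ * r) • perp2 ψ := by
  simp only [dot2, perp2, Prod.ext_iff, Prod.smul_fst, Prod.smul_snd, Prod.fst_add,
    Prod.snd_add, smul_eq_mul]
  constructor
  · linear_combination (-(r * γ.1)) * hψ
  · linear_combination (-(r * γ.2)) * hψ

theorem radon2_xbeam_eq_setIntegral_Ioi (hh : Continuous h) (hhc : HasCompactSupport h)
    (hψ : ψ.1 ^ 2 + ψ.2 ^ 2 = 1) {γ : ℝ × ℝ} (hψγ : dot2 ψ γ ≠ 0) (s : ℝ) :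
    Radon2 (Xbeam γ h) ψ s = ∫ r in Ioi (0 : ℝ), Radon2 h ψ (s + dot2 ψ γ * r) := by
  -- `e (t, r) = s • ψ + t • ψ^⊥ + r • γ`, a homeomorphism because `ψ ⋅ γ ≠ 0`
  set e := (shearHomeomorph s (dot2 ψ γ) (dot2 (perp2 ψ) γ) hψγ).trans (frameHomeomorph ψ hψ)
  have hint : Integrable (h ∘ e) (volume.prod (volume.restrict (Ioi 0))) := by
    have hplane := (hh.comp e.continuous).integrable_of_hasCompactSupport (μ := volume)
      (hhc.comp_homeomorph e)
    rw [Measure.volume_eq_prod] at hplane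
    simpa only [← Measure.prod_restrict, Measure.restrict_univ] using
      hplane.restrict (s := univ ×ˢ Ioi 0)
  calc Radon2 (Xbeam γ h) ψ s
      = ∫ t : ℝ, ∫ r in Ioi (0 : ℝ), h (e (t, r)) := by
        simp only [Radon2, Xbeam, smul_add_smul_perp2_add_smul hψ]
        rfl
    _ = ∫ r in Ioi (0 : ℝ), ∫ t : ℝ, h (e (t, r)) := integral_integral_swap hint
    _ = ∫ r in Ioi (0 : ℝ), Radon2 h ψ (s + dot2 ψ γ * r) := by
        congr 1 with r
        exact integral_add_right_eq_self (μ := volume)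
          (fun t => h (frameHomeomorph ψ hψ (s + dot2 ψ γ * r, t)))
          (dot2 (perp2 ψ) γ * r)

end Radon

theorem stmt14_general (γ ψ : ℝ × ℝ) (hψ : ψ.1 ^ 2 + ψ.2 ^ 2 = 1)
    (hψγ : dot2 ψ γ ≠ 0)
    (h : ℝ × ℝ → ℝ) (hh : ContDiff ℝ 2 h) (hhc : HasCompactSupport h) (s : ℝ) :
    deriv (fun s' => Radon2 (Xbeam γ h) ψ s') s
      = -(1 / dot2 ψ γ) * Radon2 h ψ s := by
  have hderiv := hasDerivAt_setIntegral_Ioi_zero_comp_add_mul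
    (continuous_radon2 hh.continuous hhc hψ) (integrable_radon2 hh.continuous hhc hψ) hψγ s
  simp only [← radon2_xbeam_eq_setIntegral_Ioi hh.continuous hhc hψ hψγ] at hderiv
  rw [hderiv.deriv, smul_eq_mul, one_div]

/-- `(d/ds) R(X_γ h)(ψ, s) = -(1/(ψ·γ)) R h (ψ, s)`. -/
theorem stmt14 (γ ψ : ℝ × ℝ) (hγ : γ.1 ^ 2 + γ.2 ^ 2 = 1) (hψ : ψ.1 ^ 2 + ψ.2 ^ 2 = 1)
    (hψγ : dot2 ψ γ ≠ 0)
    (h : ℝ × ℝ → ℝ) (hh : ContDiff ℝ 2 h) (hhc : HasCompactSupport h) (s : ℝ) :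
    deriv (fun s' => Radon2 (Xbeam γ h) ψ s') s
      = -(1 / dot2 ψ γ) * Radon2 h ψ s :=
  stmt14_general γ ψ hψ hψγ h hh hhc s
end
end

section
/- Let γ₁, …, γ_m be distinct unit vectors in ℝ² and c₁, …, c_m nonzero real weights, and suppose the star configuration is symmetric. Then the star transform S is not injective on compactly supported C² vector fields: there exists a vector field f = (f₁, f₂) with f₁, f₂ ∈ C²_c(ℝ²), not identically zero, such that S f(x) = 0 for all x ∈ ℝ². -/
open MeasureTheory Matrix
open scoped ContDiff

noncomputable section

/-! A symmetric pair of rays `(u, c)`, `(-u, -c)` contributes to `S f (x)` exactly `c` times the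
integrals of `f·u` and `f·u^⊥` over the whole line `x + ℝu`, because the two half-line integrals
add up. So it suffices to take `f₁ = f₂ = g` with `g` integrating to zero along every line in
every direction `γᵢ`. Such a `g` is `D_{γ₁} ⋯ D_{γ_m} p` for a bump function `p`: since the
directional derivatives commute, `g` is a derivative `D_{γᵢ} h` along each `γᵢ` of a compactly
supported `h`, so its integral over each line `x + ℝγᵢ` vanishes; and `g ≠ 0` because a compactly
supported function whose derivative along some direction vanishes is zero. -/

section DirectionalDerivative

variable {E F : Type*} [NormedAddCommGroup E] [NormedSpace ℝ E]
  [NormedAddCommGroup F] [NormedSpace ℝ F]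

def dirDeriv (u : E) (h : E → F) : E → F := fun x => fderiv ℝ h x u

variable {u v : E} {h : E → F}

theorem ContDiff.dirDeriv (hh : ContDiff ℝ ∞ h) : ContDiff ℝ ∞ (dirDeriv u h) :=
  (hh.fderiv_right (m := ∞) le_rfl).clm_apply contDiff_const

theorem HasCompactSupport.dirDeriv (hh : HasCompactSupport h) :
    HasCompactSupport (dirDeriv u h) :=
  hh.fderiv ℝ |>.comp_left (g := fun L : E →L[ℝ] F => L u) rfl

theorem dirDeriv_comm (hh : ContDiff ℝ ∞ h) :
    dirDeriv u (dirDeriv v h) = dirDeriv v (dirDeriv u h) := by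
  funext x
  have hd : DifferentiableAt ℝ (fderiv ℝ h) x :=
    (hh.fderiv_right (m := ∞) le_rfl).differentiable (by simp) x
  have hsecond : ∀ a b : E, dirDeriv a (dirDeriv b h) x = fderiv ℝ (fderiv ℝ h) x a b := by
    intro a b
    change fderiv ℝ (fun y => fderiv ℝ h y b) x a = _
    rw [fderiv_clm_apply hd (differentiableAt_const b)]
    simp
  rw [hsecond, hsecond]
  have hC2 : minSmoothness ℝ 2 ≤ ∞ := by rw [minSmoothness_of_isRCLikeNormedField]; decide
  exact (hh.contDiffAt.isSymmSndFDerivAt hC2).eq u v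

theorem hasDerivAt_comp_line (hh : Differentiable ℝ h) (x : E) (t : ℝ) :
    HasDerivAt (fun s : ℝ => h (x + s • u)) (dirDeriv u h (x + t • u)) t := by
  have hline : HasDerivAt (fun s : ℝ => x + s • u) u t := by
    simpa using ((hasDerivAt_id t).smul_const u).const_add x
  exact (hh _).hasFDerivAt.comp_hasDerivAt t hline

theorem HasCompactSupport.comp_line {M : Type*} [Zero M] {g : E → M} (hg : HasCompactSupport g)
    (hu : u ≠ 0) (x : E) : HasCompactSupport (fun t : ℝ => g (x + t • u)) :=
  hg.comp_isClosedEmbedding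
    ((Homeomorph.addLeft x).isClosedEmbedding.comp (isClosedEmbedding_smul_left hu))

theorem integral_dirDeriv_comp_line_eq_zero [CompleteSpace F] (hh : ContDiff ℝ ∞ h)
    (hs : HasCompactSupport h) (hu : u ≠ 0) (x : E) :
    ∫ t : ℝ, dirDeriv u h (x + t • u) = 0 := by
  have hline : Continuous fun t : ℝ => x + t • u := by fun_prop
  refine integral_eq_zero_of_hasDerivAt_of_integrable
    (hasDerivAt_comp_line (hh.differentiable (by simp)) x) ?_ ?_
  · exact (hh.dirDeriv.continuous.comp hline).integrable_of_hasCompactSupport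
      (hs.dirDeriv.comp_line hu x)
  · exact (hh.continuous.comp hline).integrable_of_hasCompactSupport (hs.comp_line hu x)

theorem eq_zero_of_dirDeriv_eq_zero (hh : Differentiable ℝ h) (hs : HasCompactSupport h)
    (hu : u ≠ 0) (hz : dirDeriv u h = 0) : h = 0 := by
  funext x
  have hconst : ∀ t : ℝ, h (x + t • u) = h x := fun t => by
    simpa using is_const_of_deriv_eq_zero (fun s => (hasDerivAt_comp_line hh x s).differentiableAt)
      (fun s => by simp [(hasDerivAt_comp_line hh x s).deriv, hz]) t 0
  obtain ⟨t, ht⟩ := (Set.ne_univ_iff_exists_notMem _).mp (hs.comp_line hu x).isCompact.ne_univ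
  rw [← hconst t]
  exact image_eq_zero_of_notMem_tsupport (f := fun t : ℝ => h (x + t • u)) ht

def iterDirDeriv (us : List E) (h : E → F) : E → F := us.foldr dirDeriv h

theorem ContDiff.iterDirDeriv (hh : ContDiff ℝ ∞ h) (us : List E) :
    ContDiff ℝ ∞ (iterDirDeriv us h) := by
  induction us with
  | nil => exact hh
  | cons v us ih => exact ih.dirDeriv

theorem HasCompactSupport.iterDirDeriv (hh : HasCompactSupport h) (us : List E) :
    HasCompactSupport (iterDirDeriv us h) := by
  induction us with
  | nil => exact hh
  | cons v us ih => exact ih.dirDeriv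

theorem iterDirDeriv_cons (v : E) (us : List E) (h : E → F) :
    iterDirDeriv (v :: us) h = dirDeriv v (iterDirDeriv us h) := rfl

theorem exists_iterDirDeriv_eq_dirDeriv (hh : ContDiff ℝ ∞ h) {u : E} {us : List E}
    (hu : u ∈ us) : ∃ vs : List E, iterDirDeriv us h = dirDeriv u (iterDirDeriv vs h) := by
  induction us with
  | nil => cases hu
  | cons v us ih =>
    rcases List.mem_cons.mp hu with rfl | hu
    · exact ⟨us, rfl⟩
    · obtain ⟨vs, hvs⟩ := ih hu
      refine ⟨v :: vs, ?_⟩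
      rw [iterDirDeriv_cons, hvs, dirDeriv_comm (hh.iterDirDeriv vs), iterDirDeriv_cons]

theorem integral_iterDirDeriv_comp_line_eq_zero [CompleteSpace F] (hh : ContDiff ℝ ∞ h)
    (hs : HasCompactSupport h) {u : E} {us : List E} (hu : u ∈ us) (hu0 : u ≠ 0) (x : E) :
    ∫ t : ℝ, iterDirDeriv us h (x + t • u) = 0 := by
  obtain ⟨vs, hvs⟩ := exists_iterDirDeriv_eq_dirDeriv hh hu
  rw [hvs]
  exact integral_dirDeriv_comp_line_eq_zero (hh.iterDirDeriv vs) (hs.iterDirDeriv vs) hu0 x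

theorem iterDirDeriv_ne_zero (hh : ContDiff ℝ ∞ h) (hs : HasCompactSupport h) (h0 : h ≠ 0)
    {us : List E} (hus : ∀ u ∈ us, u ≠ 0) : iterDirDeriv us h ≠ 0 := by
  induction us with
  | nil => exact h0
  | cons v us ih =>
    refine fun hz => ih (fun u hu => hus u (List.mem_cons_of_mem v hu)) ?_
    exact eq_zero_of_dirDeriv_eq_zero ((hh.iterDirDeriv us).differentiable (by simp))
      (hs.iterDirDeriv us) (hus v List.mem_cons_self) hz

end DirectionalDerivative

theorem exists_contDiff_hasCompactSupport_integral_comp_line_eq_zero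
    {E : Type*} [NormedAddCommGroup E] [NormedSpace ℝ E] [FiniteDimensional ℝ E]
    (us : List E) (hus : ∀ u ∈ us, u ≠ 0) :
    ∃ g : E → ℝ, ContDiff ℝ ∞ g ∧ HasCompactSupport g ∧ g ≠ 0 ∧
      ∀ u ∈ us, ∀ x, ∫ t : ℝ, g (x + t • u) = 0 := by
  obtain ⟨p, -, hps, hp, -, hp0⟩ :=
    exists_contDiff_tsupport_subset (n := ⊤) (Filter.univ_mem (f := nhds (0 : E)))
  have hpne : p ≠ 0 := fun h => by simp [h] at hp0
  exact ⟨iterDirDeriv us p, hp.iterDirDeriv us, hps.iterDirDeriv us,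
    iterDirDeriv_ne_zero hp hps hpne hus,
    fun u hu x => integral_iterDirDeriv_comp_line_eq_zero hp hps hu (hus u hu) x⟩

theorem Fin.sum_eq_zero_of_cancel_halves {M : Type*} [AddCommMonoid M] {m k : ℕ}
    (hk : m = 2 * k) {F : Fin m → M}
    (hF : ∀ i : Fin m, ∀ hi : (i : ℕ) < k, F i + F ⟨(i : ℕ) + k, by omega⟩ = 0) :
    ∑ i, F i = 0 := by
  subst hk
  set G : ℕ → M := fun j => if hj : j < 2 * k then F ⟨j, hj⟩ else 0 with hG
  have hFG : ∑ i, F i = ∑ i : Fin (2 * k), G i := Finset.sum_congr rfl fun i _ => by simp [hG]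
  rw [hFG, Fin.sum_univ_eq_sum_range G, two_mul, Finset.sum_range_add, ← Finset.sum_add_distrib]
  refine Finset.sum_eq_zero fun j hj => ?_
  have hjk := Finset.mem_range.mp hj
  simpa [hG, show j < 2 * k by omega, show j + k < 2 * k by omega, add_comm k j]
    using hF ⟨j, by omega⟩ hjk

def starTerm (c : ℝ) (u : ℝ × ℝ) (f₁ f₂ : ℝ × ℝ → ℝ) (x : ℝ × ℝ) : ℝ × ℝ :=
  c • (Xbeam u (fun y => f₁ y * u.1 + f₂ y * u.2) x,
       Xbeam u (fun y => f₁ y * (perp2 u).1 + f₂ y * (perp2 u).2) x)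

theorem starS_eq_sum_starTerm (m : ℕ) (γ : Fin m → ℝ × ℝ) (c : Fin m → ℝ)
    (f₁ f₂ : ℝ × ℝ → ℝ) (x : ℝ × ℝ) :
    starS m γ c f₁ f₂ x = ∑ i, starTerm (c i) (γ i) f₁ f₂ x := rfl

theorem perp2_neg (u : ℝ × ℝ) : perp2 (-u) = -perp2 u := rfl

theorem Xbeam_add_Xbeam_neg {u : ℝ × ℝ} {h : ℝ × ℝ → ℝ} {x : ℝ × ℝ}
    (hh : Integrable fun t : ℝ => h (x + t • u)) :
    Xbeam u h x + Xbeam (-u) h x = ∫ t : ℝ, h (x + t • u) := by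
  have hneg : Xbeam (-u) h x = ∫ t in Set.Iic (0 : ℝ), h (x + t • u) := by
    simpa [Xbeam, smul_neg, neg_smul] using integral_comp_neg_Ioi (0 : ℝ) fun t => h (x + t • u)
  rw [hneg, add_comm]
  exact intervalIntegral.integral_Iic_add_Ioi hh.integrableOn hh.integrableOn

theorem starTerm_add_starTerm_neg_eq_zero {c : ℝ} {u : ℝ × ℝ} {f₁ f₂ : ℝ × ℝ → ℝ} {x : ℝ × ℝ}
    (hf₁ : Integrable fun t : ℝ => f₁ (x + t • u)) (hf₂ : Integrable fun t : ℝ => f₂ (x + t • u))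
    (h₁ : ∫ t : ℝ, f₁ (x + t • u) = 0) (h₂ : ∫ t : ℝ, f₂ (x + t • u) = 0) :
    starTerm c u f₁ f₂ x + starTerm (-c) (-u) f₁ f₂ x = 0 := by
  have hcomb : ∀ a b : ℝ, c * Xbeam u (fun y => f₁ y * a + f₂ y * b) x
      + -c * Xbeam (-u) (fun y => f₁ y * -a + f₂ y * -b) x = 0 := by
    intro a b
    have hneg : Xbeam (-u) (fun y => f₁ y * -a + f₂ y * -b) x
        = - Xbeam (-u) (fun y => f₁ y * a + f₂ y * b) x := by
      rw [Xbeam, Xbeam, ← integral_neg]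
      simp only [mul_neg, neg_add]
    have hline := Xbeam_add_Xbeam_neg (h := fun y => f₁ y * a + f₂ y * b)
      ((hf₁.mul_const a).add (hf₂.mul_const b))
    rw [integral_add (hf₁.mul_const a) (hf₂.mul_const b), integral_mul_const, integral_mul_const,
      h₁, h₂] at hline
    rw [hneg]
    linear_combination c * hline
  ext
  · simpa [starTerm] using hcomb u.1 u.2
  · simpa [starTerm, perp2_neg] using hcomb (perp2 u).1 (perp2 u).2

theorem stmt17_general (m : ℕ) (γ : Fin m → ℝ × ℝ) (c : Fin m → ℝ)
    (hγu : ∀ i, (γ i).1 ^ 2 + (γ i).2 ^ 2 = 1)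
    (hsym : StarSymmetric m γ c) :
    ∃ f₁ f₂ : ℝ × ℝ → ℝ, IsC2c f₁ ∧ IsC2c f₂ ∧
      ¬ (∀ x, f₁ x = 0 ∧ f₂ x = 0) ∧
      ∀ x, starS m γ c f₁ f₂ x = 0 := by
  obtain ⟨k, hk, σ, hσ⟩ := hsym
  have hγ0 : ∀ i, γ i ≠ 0 := fun i h0 => by simpa [h0] using hγu i
  obtain ⟨g, hg, hgs, hg0, hgline⟩ :=
    exists_contDiff_hasCompactSupport_integral_comp_line_eq_zero (List.ofFn γ)
      (by simpa [List.mem_ofFn] using hγ0)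
  have hgC2 : IsC2c g := ⟨hg.of_le (by decide), hgs⟩
  refine ⟨g, g, hgC2, hgC2, fun hz => hg0 (funext fun y => (hz y).1), fun x => ?_⟩
  rw [starS_eq_sum_starTerm, ← Equiv.sum_comp σ]
  refine Fin.sum_eq_zero_of_cancel_halves hk fun i hi => ?_
  obtain ⟨hγi, hci⟩ := hσ i hi
  set j : Fin m := σ ⟨(i : ℕ) + k, by omega⟩
  have hint : Integrable fun t : ℝ => g (x + t • γ j) :=
    (hg.continuous.comp (by fun_prop)).integrable_of_hasCompactSupport (hgs.comp_line (hγ0 j) x)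
  have hline := hgline (γ j) (List.mem_ofFn.mpr ⟨j, rfl⟩) x
  rw [hγi, hci, add_comm]
  exact starTerm_add_starTerm_neg_eq_zero hint hint hline hline

/-- a symmetric star transform is not injective on compactly
supported C² vector fields. -/
theorem stmt17 (m : ℕ) (γ : Fin m → ℝ × ℝ) (c : Fin m → ℝ)
    (hγu : ∀ i, (γ i).1 ^ 2 + (γ i).2 ^ 2 = 1) (hγd : Function.Injective γ)
    (hc : ∀ i, c i ≠ 0) (hsym : StarSymmetric m γ c) :
    ∃ f₁ f₂ : ℝ × ℝ → ℝ, IsC2c f₁ ∧ IsC2c f₂ ∧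
      ¬ (∀ x, f₁ x = 0 ∧ f₂ x = 0) ∧
      ∀ x, starS m γ c f₁ f₂ x = 0 :=
  stmt17_general m γ c hγu hsym
end
end

section
/- Let γ₁, …, γ_m be distinct unit vectors in ℝ² and c₁, …, c_m nonzero real numbers. Define the ℝ²-valued polynomial map P(ψ₁, ψ₂) = Σᵢ₌₁^m cᵢ · γᵢ · ∏_{j ≠ i} (ψ₁·aⱼ + ψ₂·bⱼ), where γⱼ = (aⱼ, bⱼ). If P(ψ₁, ψ₂) = 0 for all (ψ₁, ψ₂) ∈ ℝ², then m is even, say m = 2k, and there is a permutation σ of {1, …, m} such that γ_{σ(i)} = -γ_{σ(k+i)} and c_{σ(i)} = -c_{σ(k+i)} for all i = 1, …, k. -/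
open MeasureTheory Matrix

noncomputable section

lemma par_of_cross (u v : ℝ × ℝ) (hu : u.1^2 + u.2^2 = 1) (hv : v.1^2 + v.2^2 = 1)
    (h : u.1 * v.2 - u.2 * v.1 = 0) : v = u ∨ v = -u := by
  set d := u.1 * v.1 + u.2 * v.2 with hd
  have hd2 : d ^ 2 = 1 := by linear_combination (v.1^2+v.2^2) * hu + hv - (u.1*v.2-u.2*v.1) * h
  have h1 : v.1 = d * u.1 := by linear_combination (-u.2) * h + (-v.1) * hu
  have h2 : v.2 = d * u.2 := by linear_combination u.1 * h + (-v.2) * hu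
  have : (d - 1) * (d + 1) = 0 := by linear_combination hd2
  rcases mul_eq_zero.mp this with h' | h'
  · left; have : d = 1 := by linarith
    rw [this] at h1 h2; exact Prod.ext (by simpa using h1) (by simpa using h2)
  · right; have : d = -1 := by linarith
    rw [this] at h1 h2
    exact Prod.ext (by simp [h1]) (by simp [h2])

lemma unit_ne_zero (u : ℝ × ℝ) (hu : u.1^2 + u.2^2 = 1) : u ≠ 0 := by
  intro h; rw [h] at hu; norm_num at hu

lemma partner (m : ℕ) (γ : Fin m → ℝ × ℝ) (c : Fin m → ℝ)
    (hγu : ∀ i, (γ i).1 ^ 2 + (γ i).2 ^ 2 = 1) (hγd : Function.Injective γ)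
    (hc : ∀ i, c i ≠ 0)
    (hP : ∀ ψ₁ ψ₂ : ℝ,
      ∑ i, (c i * ∏ j ∈ Finset.univ.erase i, (ψ₁ * (γ j).1 + ψ₂ * (γ j).2)) • γ i
        = 0) (i : Fin m) : ∃ j, γ j = - γ i := by
  have H := hP (-(γ i).2) ((γ i).1)
  rw [Finset.sum_eq_single i] at H
  · rcases smul_eq_zero.mp H with h0 | h0
    · rcases mul_eq_zero.mp h0 with h0 | h0
      · exact absurd h0 (hc i)
      · obtain ⟨j, hj, hj0⟩ := Finset.prod_eq_zero_iff.mp h0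
        have hcr : (γ i).1 * (γ j).2 - (γ i).2 * (γ j).1 = 0 := by linarith [hj0]
        rcases par_of_cross _ _ (hγu i) (hγu j) hcr with h | h
        · exact absurd (hγd h) (Finset.ne_of_mem_erase hj)
        · exact ⟨j, h⟩
    · exact absurd h0 (unit_ne_zero _ (hγu i))
  · intro l _ hl
    have hiz : i ∈ Finset.univ.erase l := Finset.mem_erase.mpr ⟨Ne.symm hl, Finset.mem_univ i⟩
    rw [Finset.prod_eq_zero hiz (by ring), mul_zero, zero_smul]
  · intro h; exact absurd (Finset.mem_univ i) h

lemma partner_c (m : ℕ) (γ : Fin m → ℝ × ℝ) (c : Fin m → ℝ)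
    (hγu : ∀ i, (γ i).1 ^ 2 + (γ i).2 ^ 2 = 1) (hγd : Function.Injective γ)
    (hc : ∀ i, c i ≠ 0)
    (hP : ∀ ψ₁ ψ₂ : ℝ,
      ∑ i, (c i * ∏ j ∈ Finset.univ.erase i, (ψ₁ * (γ j).1 + ψ₂ * (γ j).2)) • γ i
        = 0) (i i' : Fin m) (hii' : γ i' = - γ i) : c i' = - c i := by
  have hγi0 : γ i ≠ 0 := unit_ne_zero _ (hγu i)
  have hne : i' ≠ i := by
    intro h; rw [h] at hii'
    apply hγi0
    have h1 := congrArg Prod.fst hii'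
    have h2 := congrArg Prod.snd hii'
    simp only [Prod.fst_neg, Prod.snd_neg] at h1 h2
    exfalso; nlinarith [hγu i, h1, h2]
  have ha' : (γ i').1 = -(γ i).1 := by rw [hii']; rfl
  have hb' : (γ i').2 = -(γ i).2 := by rw [hii']; rfl
  set f : ℝ → Fin m → ℝ := fun t j =>
    ((γ i).1 * (γ j).2 - (γ i).2 * (γ j).1) + t * ((γ i).1 * (γ j).1 + (γ i).2 * (γ j).2)
    with hf
  set S : Finset (Fin m) := (Finset.univ.erase i).erase i' with hS
  set F : ℝ → ℝ × ℝ := fun t =>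
    ((c i + c i') * ∏ j ∈ S, f t j) • γ i
      + t • ∑ l ∈ S, (c l * ∏ j ∈ S.erase l, f t j) • γ l with hF
  have hi'mem : i' ∈ Finset.univ.erase i := Finset.mem_erase.mpr ⟨hne, Finset.mem_univ _⟩
  have hfi : ∀ t, f t i = t := by
    intro t; simp only [hf]; linear_combination t * hγu i
  have hfi' : ∀ t, f t i' = -t := by
    intro t; simp only [hf]; rw [ha', hb']; linear_combination (-t) * hγu i
  -- Step A : the substituted star equation
  have key : ∀ t : ℝ, (-t) • F t = 0 := by
    intro t
    have H := hP (-(γ i).2 + t * (γ i).1) ((γ i).1 + t * (γ i).2)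
    have hprod : ∀ l : Fin m, (∏ j ∈ Finset.univ.erase l,
        ((-(γ i).2 + t * (γ i).1) * (γ j).1 + ((γ i).1 + t * (γ i).2) * (γ j).2))
        = ∏ j ∈ Finset.univ.erase l, f t j := by
      intro l; exact Finset.prod_congr rfl fun j _ => by simp only [hf]; ring
    simp only [hprod] at H
    rw [← Finset.add_sum_erase _ _ (Finset.mem_univ i),
        ← Finset.add_sum_erase _ _ hi'mem] at H
    -- rewrite the three kinds of products
    rw [← Finset.mul_prod_erase _ _ hi'mem] at H
    have himem' : i ∈ Finset.univ.erase i' :=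
      Finset.mem_erase.mpr ⟨hne.symm, Finset.mem_univ _⟩
    rw [← Finset.mul_prod_erase _ _ himem', show ((Finset.univ.erase i').erase i) = ((Finset.univ.erase i).erase i') from Finset.erase_right_comm] at H
    have hsum2 : ∑ l ∈ (Finset.univ.erase i).erase i',
        (c l * ∏ j ∈ Finset.univ.erase l, f t j) • γ l
        = ∑ l ∈ S, (c l * (f t i * (f t i' * ∏ j ∈ S.erase l, f t j))) • γ l := by
      apply Finset.sum_congr rfl
      intro l hl
      have hli : l ≠ i := Finset.ne_of_mem_erase (Finset.mem_of_mem_erase hl)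
      have hli' : l ≠ i' := Finset.ne_of_mem_erase hl
      have h1 : i ∈ Finset.univ.erase l := Finset.mem_erase.mpr ⟨hli.symm, Finset.mem_univ _⟩
      rw [← Finset.mul_prod_erase _ _ h1, show ((Finset.univ.erase l).erase i) = ((Finset.univ.erase i).erase l) from Finset.erase_right_comm]
      have h2 : i' ∈ (Finset.univ.erase i).erase l :=
        Finset.mem_erase.mpr ⟨hli'.symm, Finset.mem_erase.mpr ⟨hne, Finset.mem_univ _⟩⟩
      rw [← Finset.mul_prod_erase _ _ h2, show (((Finset.univ.erase i).erase l).erase i') = (((Finset.univ.erase i).erase i').erase l) from Finset.erase_right_comm]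
    rw [hsum2] at H
    have hsum3 : ∑ l ∈ S, (c l * (f t i * (f t i' * ∏ j ∈ S.erase l, f t j))) • γ l
        = (t * (-t)) • ∑ l ∈ S, (c l * ∏ j ∈ S.erase l, f t j) • γ l := by
      rw [Finset.smul_sum]
      apply Finset.sum_congr rfl
      intro l _
      rw [smul_smul, hfi, hfi']
      congr 1; ring
    rw [hsum3, hfi, hfi', hii'] at H
    rw [hF]
    set Z := ∑ l ∈ S, (c l * ∏ j ∈ S.erase l, f t j) • γ l with hZ
    set G := ∏ j ∈ S, f t j with hG
    rw [show (0 : ℝ × ℝ) = (c i * (-t * G)) • γ i + ((c i' * (t * G)) • -γ i + (t * -t) • Z)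
        from H.symm]
    module
  -- Step B : F t = 0 for t ≠ 0
  have hFz : ∀ t : ℝ, t ≠ 0 → F t = 0 := by
    intro t ht
    rcases smul_eq_zero.mp (key t) with h | h
    · exact absurd (neg_eq_zero.mp h) ht
    · exact h
  -- Step C : F is continuous
  have hfc : ∀ j, Continuous fun t => f t j := by
    intro j
    simp only [hf]
    exact continuous_const.add (continuous_id.mul continuous_const)
  have hFc : Continuous F := by
    apply Continuous.add
    · exact (continuous_const.mul (continuous_finset_prod S fun j _ => hfc j)).smul
        continuous_const
    · exact continuous_id.smul (continuous_finset_sum S fun l _ =>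
        (continuous_const.mul (continuous_finset_prod _ fun j _ => hfc j)).smul
          continuous_const)
  -- Step D : F 0 = 0
  have hF0 : F 0 = 0 := by
    have heq : F = fun _ => (0 : ℝ × ℝ) :=
      Continuous.ext_on (dense_compl_singleton (0:ℝ)) hFc continuous_const
        (fun t ht => hFz t ht)
    exact congrFun heq 0
  -- Step E : conclude
  simp only [hF, zero_smul, add_zero] at hF0
  rcases smul_eq_zero.mp hF0 with h | h
  · rcases mul_eq_zero.mp h with h | h
    · linarith
    · exfalso
      obtain ⟨j, hj, hj0⟩ := Finset.prod_eq_zero_iff.mp h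
      have hji' : j ≠ i' := Finset.ne_of_mem_erase hj
      have hji : j ≠ i := Finset.ne_of_mem_erase (Finset.mem_of_mem_erase hj)
      have hcr : (γ i).1 * (γ j).2 - (γ i).2 * (γ j).1 = 0 := by
        simp only [hf] at hj0; linarith [hj0]
      rcases par_of_cross _ _ (hγu i) (hγu j) hcr with h' | h'
      · exact hji (hγd h')
      · exact hji' (hγd (h'.trans hii'.symm))
  · exact absurd h hγi0

lemma starSymmetric_of_pairing (m : ℕ) (γ : Fin m → ℝ × ℝ) (c : Fin m → ℝ)
    (hγu : ∀ i, (γ i).1 ^ 2 + (γ i).2 ^ 2 = 1) (hγd : Function.Injective γ)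
    (hpart : ∀ i, ∃ j, γ j = - γ i)
    (hpc : ∀ i i', γ i' = - γ i → c i' = - c i) :
    StarSymmetric m γ c := by
  classical
  set τ : Fin m → Fin m := fun i => Classical.choose (hpart i) with hτdef
  have hτ : ∀ i, γ (τ i) = - γ i := fun i => Classical.choose_spec (hpart i)
  have hττ : ∀ i, τ (τ i) = i := fun i => hγd (by rw [hτ, hτ, neg_neg])
  have hτinj : Function.Injective τ := Function.LeftInverse.injective hττ
  have hτne : ∀ i, τ i ≠ i := by
    intro i h
    have h1 := hτ i
    rw [h] at h1
    have h2 := congrArg Prod.fst h1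
    have h3 := congrArg Prod.snd h1
    simp only [Prod.fst_neg, Prod.snd_neg] at h2 h3
    nlinarith [hγu i, h2, h3]
  have hcτ : ∀ i, c (τ i) = - c i := fun i => hpc i (τ i) (hτ i)
  set A : Finset (Fin m) := Finset.univ.filter (fun x => (x : ℕ) < (τ x : ℕ)) with hA
  have hmemA : ∀ x, x ∈ A ↔ (x : ℕ) < (τ x : ℕ) := by
    intro x; simp [hA]
  have hvalne : ∀ x : Fin m, (x : ℕ) ≠ (τ x : ℕ) := by
    intro x h; exact hτne x (Fin.ext h.symm)
  have hAτ : ∀ x, x ∈ A → τ x ∉ A := by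
    intro x hx h
    rw [hmemA] at hx h
    rw [hττ] at h; omega
  have hA' : ∀ x, x ∉ A → τ x ∈ A := by
    intro x hx
    rw [hmemA] at hx ⊢
    rw [hττ]
    have := hvalne x; omega
  set k := A.card with hk
  have hcard : Aᶜ.card = k := by
    rw [hk]
    apply Finset.card_bij (fun (a : Fin m) (_ : a ∈ Aᶜ) => τ a)
    · intro a ha
      exact hA' a (Finset.mem_compl.mp ha)
    · intro a ha b hb hab
      exact hτinj hab
    · intro b hb
      refine ⟨τ b, Finset.mem_compl.mpr (hAτ b hb), hττ b⟩
  have hm : m = 2 * k := by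
    have h1 := Finset.card_compl (α := Fin m) A
    simp only [Fintype.card_fin] at h1
    have h2 : A.card ≤ m := by
      simpa using Finset.card_le_card (Finset.subset_univ A)
    omega
  refine ⟨k, hm, ?_⟩
  -- enumeration of A
  have hkc : A.card = k := rfl
  set e : Fin k → Fin m := fun j => (A.orderIsoOfFin hkc j : Fin m) with he
  have heA : ∀ j, e j ∈ A := fun j => (A.orderIsoOfFin hkc j).2
  have heinj : Function.Injective e := by
    intro a b hab
    exact (A.orderIsoOfFin hkc).injective (Subtype.ext hab)
  set σf : Fin m → Fin m := fun x =>
    if h : (x : ℕ) < k then e ⟨x, h⟩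
    else τ (e ⟨(x : ℕ) - k, by have := x.isLt; omega⟩) with hσf
  have hσinj : Function.Injective σf := by
    intro x y hxy
    simp only [hσf] at hxy
    by_cases hx : (x : ℕ) < k <;> by_cases hy : (y : ℕ) < k
    · rw [dif_pos hx, dif_pos hy] at hxy
      have h3 := congrArg Fin.val (heinj hxy)
      simp only at h3
      exact Fin.ext h3
    · rw [dif_pos hx, dif_neg hy] at hxy
      exact absurd (hxy ▸ heA _) (hAτ _ (heA _))
    · rw [dif_neg hx, dif_pos hy] at hxy
      exact absurd (hxy.symm ▸ heA _) (hAτ _ (heA _))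
    · rw [dif_neg hx, dif_neg hy] at hxy
      have := congrArg Fin.val (heinj (hτinj hxy))
      simp only at this
      have hx' := x.isLt; have hy' := y.isLt
      exact Fin.ext (by omega)
  have hσbij : Function.Bijective σf := Finite.injective_iff_bijective.mp hσinj
  refine ⟨Equiv.ofBijective σf hσbij, ?_⟩
  intro i hi
  have h1 : σf i = e ⟨i, hi⟩ := dif_pos hi
  have h2 : σf ⟨(i : ℕ) + k, by omega⟩ = τ (e ⟨i, hi⟩) := by
    have hnk : ¬ ((⟨(i : ℕ) + k, by omega⟩ : Fin m) : ℕ) < k := by simp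
    rw [hσf]
    simp only [dif_neg hnk]
    congr 1
    congr 1
    exact Fin.ext (by simp)
  simp only [Equiv.ofBijective_apply, h1, h2]
  constructor
  · rw [hτ, neg_neg]
  · rw [hcτ, neg_neg]


/-- if `P(ψ₁,ψ₂) = ∑ cᵢ γᵢ ∏_{j≠i} (ψ₁ aⱼ + ψ₂ bⱼ)` vanishes
identically, then the configuration is symmetric. -/
theorem stmt19 (m : ℕ) (γ : Fin m → ℝ × ℝ) (c : Fin m → ℝ)
    (hγu : ∀ i, (γ i).1 ^ 2 + (γ i).2 ^ 2 = 1) (hγd : Function.Injective γ)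
    (hc : ∀ i, c i ≠ 0)
    (hP : ∀ ψ₁ ψ₂ : ℝ,
      ∑ i, (c i * ∏ j ∈ Finset.univ.erase i, (ψ₁ * (γ j).1 + ψ₂ * (γ j).2)) • γ i
        = 0) :
    StarSymmetric m γ c := by
  exact starSymmetric_of_pairing m γ c hγu hγd
    (partner m γ c hγu hγd hc hP)
    (fun i i' h => partner_c m γ c hγu hγd hc hP i i' h)
end
end
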